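/- arXiv:2206.02914 — 4 statements merged into one kernel-verified Lean document; each statement's English description precedes it below -/
import Mathlib

section
/- Suppose Y ∈ {0,1}, Ŷ : X⁰ → {0,1,∅}, X⁰ and X¹ are conditionally independent given Y, α = P[Y=0|Ŷ=1], γ = P[Y=1|Ŷ=0], α+γ < 1, and P[Ŷ=y] > 0 for y ∈ {0,1}. Then for any classifier f : X¹ → {0,1}, the balanced error on true labels err_bal(f,Y) = ½(P[f=0|Y=1] + P[f=1|Y=0]) and the balanced error on pseudolabels err_bal(f,Ŷ) = ½(P[f=0|Ŷ=1] + P[f=1|Ŷ=0]) satisfy err_bal(f,Y) = (err_bal(f,Ŷ) − (α+γ)/2) / (1−α−γ). -/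
open MeasureTheory ProbabilityTheory

section Aux

variable {Ω : Type*} [MeasurableSpace Ω] (μ : Measure Ω) [IsProbabilityMeasure μ]

lemma aux_Yt_compl (Y : Ω → Bool) : (Y ⁻¹' {true} : Set Ω)ᶜ = Y ⁻¹' {false} := by
  ext ω; simp

lemma aux_cond_sum_one (Y : Ω → Bool) (hY : Measurable Y) (S : Set Ω) (hS0 : μ S ≠ 0) :
    (μ[Y ⁻¹' {true} | S]).toReal + (μ[Y ⁻¹' {false} | S]).toReal = 1 := by
  haveI := cond_isProbabilityMeasure (μ := μ) hS0
  have h := measure_add_measure_compl (μ := μ[|S]) (hY (measurableSet_singleton true))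
  rw [aux_Yt_compl, measure_univ] at h
  have h2 := ENNReal.toReal_add (measure_ne_top (μ[|S]) (Y ⁻¹' {true}))
    (measure_ne_top (μ[|S]) (Y ⁻¹' {false}))
  rw [← h2, h, ENNReal.toReal_one]

lemma aux_cond_compl (s t : Set Ω) (ht : MeasurableSet t) (hs0 : μ s ≠ 0) :
    (μ[tᶜ | s]).toReal = 1 - (μ[t | s]).toReal := by
  haveI := cond_isProbabilityMeasure (μ := μ) hs0
  have h := measure_add_measure_compl (μ := μ[|s]) ht
  rw [measure_univ] at h
  have h2 := congrArg ENNReal.toReal h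
  rw [ENNReal.toReal_add (measure_ne_top (μ[|s]) t) (measure_ne_top (μ[|s]) tᶜ),
    ENNReal.toReal_one] at h2
  linarith

lemma aux_cond_decomp (Y : Ω → Bool) (hY : Measurable Y) (S T : Set Ω)
    (hS : MeasurableSet S) (hS0 : μ S ≠ 0)
    (hY0 : μ (Y ⁻¹' {false}) ≠ 0) (hY1 : μ (Y ⁻¹' {true}) ≠ 0)
    (hCI : ∀ y : Bool, μ[S ∩ T | Y ⁻¹' {y}] = μ[S | Y ⁻¹' {y}] * μ[T | Y ⁻¹' {y}]) :
    (μ[T | S]).toReal =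
      (μ[T | Y ⁻¹' {true}]).toReal * (μ[Y ⁻¹' {true} | S]).toReal +
      (μ[T | Y ⁻¹' {false}]).toReal * (μ[Y ⁻¹' {false} | S]).toReal := by
  have hmy : ∀ y : Bool, MeasurableSet (Y ⁻¹' {y}) := fun y => hY (measurableSet_singleton y)
  have key : ∀ y : Bool, μ (S ∩ T ∩ Y ⁻¹' {y}) = μ[T | Y ⁻¹' {y}] * μ (S ∩ Y ⁻¹' {y}) := by
    intro y
    have h1 := cond_mul_eq_inter (hmy y) (S ∩ T) μ
    rw [hCI y] at h1
    calc μ (S ∩ T ∩ Y ⁻¹' {y}) = μ (Y ⁻¹' {y} ∩ (S ∩ T)) := by rw [Set.inter_comm]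
      _ = μ[S | Y ⁻¹' {y}] * μ[T | Y ⁻¹' {y}] * μ (Y ⁻¹' {y}) := h1.symm
      _ = μ[T | Y ⁻¹' {y}] * (μ[S | Y ⁻¹' {y}] * μ (Y ⁻¹' {y})) := by ring
      _ = μ[T | Y ⁻¹' {y}] * μ (Y ⁻¹' {y} ∩ S) := by rw [cond_mul_eq_inter (hmy y)]
      _ = μ[T | Y ⁻¹' {y}] * μ (S ∩ Y ⁻¹' {y}) := by rw [Set.inter_comm]
  have hsplit : μ (S ∩ T) = μ (S ∩ T ∩ Y ⁻¹' {true}) + μ (S ∩ T ∩ Y ⁻¹' {false}) := by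
    have h := measure_inter_add_diff (μ := μ) (S ∩ T) (hmy true)
    rw [Set.diff_eq, aux_Yt_compl] at h
    exact h.symm
  have henn : μ[T | S] = μ[T | Y ⁻¹' {true}] * μ[Y ⁻¹' {true} | S] +
      μ[T | Y ⁻¹' {false}] * μ[Y ⁻¹' {false} | S] := by
    rw [cond_apply hS, cond_apply hS, cond_apply hS, hsplit, key true, key false]
    ring
  haveI ht := cond_isProbabilityMeasure (μ := μ) hY1
  haveI hfp := cond_isProbabilityMeasure (μ := μ) hY0
  haveI hsp := cond_isProbabilityMeasure (μ := μ) hS0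
  rw [henn, ENNReal.toReal_add, ENNReal.toReal_mul, ENNReal.toReal_mul]
  · exact ENNReal.mul_ne_top (measure_ne_top _ _) (measure_ne_top _ _)
  · exact ENNReal.mul_ne_top (measure_ne_top _ _) (measure_ne_top _ _)

end Aux

/-- Balanced error transformation lemma:
`err_bal(f,Y) = (err_bal(f,Ŷ) − (α+γ)/2)/(1−α−γ)`. -/
theorem stmt_5 {Ω 𝓧₀ 𝓧₁ : Type*} [MeasurableSpace Ω] [MeasurableSpace 𝓧₀] [MeasurableSpace 𝓧₁]
    (μ : Measure Ω) [IsProbabilityMeasure μ]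
    (X₀ : Ω → 𝓧₀) (X₁ : Ω → 𝓧₁) (Y : Ω → Bool)
    (hX₀ : Measurable X₀) (hX₁ : Measurable X₁) (hY : Measurable Y)
    (hCI : ∀ (A : Set 𝓧₀) (B : Set 𝓧₁), MeasurableSet A → MeasurableSet B → ∀ y : Bool,
      μ[X₀ ⁻¹' A ∩ X₁ ⁻¹' B | Y ⁻¹' {y}] =
        μ[X₀ ⁻¹' A | Y ⁻¹' {y}] * μ[X₁ ⁻¹' B | Y ⁻¹' {y}])
    (Yhat : 𝓧₀ → Option Bool)
    (hYhat : ∀ o : Option Bool, MeasurableSet (Yhat ⁻¹' {o}))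
    (hY0 : μ (Y ⁻¹' {false}) ≠ 0) (hY1 : μ (Y ⁻¹' {true}) ≠ 0)
    (hYhat0 : μ ((fun ω => Yhat (X₀ ω)) ⁻¹' {some false}) ≠ 0)
    (hYhat1 : μ ((fun ω => Yhat (X₀ ω)) ⁻¹' {some true}) ≠ 0)
    -- noise parameters α = P[Y=0 | Ŷ=1] and γ = P[Y=1 | Ŷ=0]
    (α γ : ℝ)
    (hα : α = (μ[Y ⁻¹' {false} | (fun ω => Yhat (X₀ ω)) ⁻¹' {some true}]).toReal)
    (hγ : γ = (μ[Y ⁻¹' {true} | (fun ω => Yhat (X₀ ω)) ⁻¹' {some false}]).toReal)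
    (hαγ : α + γ < 1)
    (f : 𝓧₁ → Bool) (hf : Measurable f) :
    (1 / 2) * ((μ[{ω | f (X₁ ω) = false} | Y ⁻¹' {true}]).toReal +
        (μ[{ω | f (X₁ ω) = true} | Y ⁻¹' {false}]).toReal) =
      ((1 / 2) * ((μ[{ω | f (X₁ ω) = false} | (fun ω => Yhat (X₀ ω)) ⁻¹' {some true}]).toReal +
          (μ[{ω | f (X₁ ω) = true} | (fun ω => Yhat (X₀ ω)) ⁻¹' {some false}]).toReal) -
        (α + γ) / 2) / (1 - α - γ) := by
  -- abbreviations
  set E1 : Set Ω := (fun ω => Yhat (X₀ ω)) ⁻¹' {some true} with hE1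
  set E0 : Set Ω := (fun ω => Yhat (X₀ ω)) ⁻¹' {some false} with hE0
  have hE1m : MeasurableSet E1 := hX₀ (hYhat (some true))
  have hE0m : MeasurableSet E0 := hX₀ (hYhat (some false))
  have hTeq : {ω | f (X₁ ω) = false} = X₁ ⁻¹' (f ⁻¹' {false}) := rfl
  have hTceq : {ω | f (X₁ ω) = true} = X₁ ⁻¹' (f ⁻¹' {true}) := rfl
  have hTc : (X₁ ⁻¹' (f ⁻¹' {true}) : Set Ω) = (X₁ ⁻¹' (f ⁻¹' {false}))ᶜ := by
    ext ω; simp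
  have hfm : ∀ b : Bool, MeasurableSet (f ⁻¹' {b}) := fun b => hf (measurableSet_singleton b)
  -- the four events conditioned on Y
  set a := (μ[X₁ ⁻¹' (f ⁻¹' {false}) | Y ⁻¹' {true}]).toReal with ha
  set b := (μ[X₁ ⁻¹' (f ⁻¹' {true}) | Y ⁻¹' {false}]).toReal with hb
  -- complements conditioned on Y
  have hcomp1 : (μ[X₁ ⁻¹' (f ⁻¹' {true}) | Y ⁻¹' {true}]).toReal = 1 - a := by
    rw [hTc]; exact aux_cond_compl μ _ _ (hX₁ (hfm false)) hY1
  have hcomp0 : (μ[X₁ ⁻¹' (f ⁻¹' {false}) | Y ⁻¹' {false}]).toReal = 1 - b := by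
    have : (X₁ ⁻¹' (f ⁻¹' {false}) : Set Ω) = (X₁ ⁻¹' (f ⁻¹' {true}))ᶜ := by ext ω; simp
    rw [this]; exact aux_cond_compl μ _ _ (hX₁ (hfm true)) hY0
  -- weights
  have hw1 : (μ[Y ⁻¹' {true} | E1]).toReal = 1 - α := by
    have := aux_cond_sum_one μ Y hY E1 hYhat1
    rw [← hα] at this; linarith
  have hw0 : (μ[Y ⁻¹' {false} | E0]).toReal = 1 - γ := by
    have := aux_cond_sum_one μ Y hY E0 hYhat0
    rw [← hγ] at this; linarith
  -- decompositions
  have hd1 : (μ[X₁ ⁻¹' (f ⁻¹' {false}) | E1]).toReal = a * (1 - α) + (1 - b) * α := by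
    rw [aux_cond_decomp μ Y hY E1 _ hE1m hYhat1 hY0 hY1
      (fun y => hCI (Yhat ⁻¹' {some true}) (f ⁻¹' {false}) (hYhat _) (hfm false) y),
      hw1, ← hα, hcomp0, ← ha]
  have hd0 : (μ[X₁ ⁻¹' (f ⁻¹' {true}) | E0]).toReal = (1 - a) * γ + b * (1 - γ) := by
    rw [aux_cond_decomp μ Y hY E0 _ hE0m hYhat0 hY0 hY1
      (fun y => hCI (Yhat ⁻¹' {some false}) (f ⁻¹' {true}) (hYhat _) (hfm true) y),
      hw0, ← hγ, hcomp1, ← hb]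
  have hne : 1 - α - γ ≠ 0 := by linarith
  rw [hTeq, hTceq, hd1, hd0, ← ha, ← hb]
  field_simp
  ring
end

section
/- Let (Xᵢ, Yᵢ), i = 1..n, be i.i.d. with Yᵢ ∈ {0,1,∅}, fix y ∈ {0,1} with p_y := P[Y=y] > 0, and fix a function h. Define γ = P[h(X)=ȳ | Y=y] and the empirical version γ_S = (Σᵢ 1[h(Xᵢ)=ȳ]1[Yᵢ=y]) / (Σᵢ 1[Yᵢ=y]) (defined arbitrarily when the denominator is zero). Then for any t ∈ (0,1), P[|γ_S − γ| > t] ≤ 3·exp(−(t²/8)·n·p_y). -/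
open MeasureTheory ProbabilityTheory

instance : MeasurableSpace (Option Bool) := ⊤

/-!
Write `K` and `M` for the numbers of indices with `Zᵢ ∈ A ∩ B` and with `Zᵢ ∈ B`,
`p = ν B` and `γ = ν[A | B]`. The event `|K / M - γ| > t` lies in the union of
`K - (γ + t) M ≥ 0`, `(γ - t) M - K ≥ 0` and `M = 0`, and each of these is an event
`a K + b M ≥ 0`. By independence and the Chernoff bound its probability is at most the `n`-th
power of `E[exp (a 𝟙_{A ∩ B} + b 𝟙_B)] = 1 - p + p (γ e^{a + b} + (1 - γ) e^b)`, in which the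
conditional factor is a Bernoulli(γ) exponential moment. For the three choices of `(a, b)`
this factor is at most `e^{-t²/4}`, and `1 - p + p e^{-t²/4} ≤ e^{-p t²/8}`. Keeping `p` as
a factor, rather than applying Hoeffding to the unconditioned summands, is what gives the
exponent `n p` instead of `n p²`.
-/

open Real

lemma exp_le_one_add_add_sq {x : ℝ} (hx : |x| ≤ 1) : exp x ≤ 1 + x + x ^ 2 := by
  linarith [le_abs_self (exp x - 1 - x), abs_exp_sub_one_sub_id_le hx]

lemma bernoulli_mgf_le_exp_sq {γ l : ℝ} (hγ0 : 0 ≤ γ) (hγ1 : γ ≤ 1) (hl : |l| ≤ 1) :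
    γ * exp (l * (1 - γ)) + (1 - γ) * exp (-(l * γ)) ≤ exp (l ^ 2) :=
  calc γ * exp (l * (1 - γ)) + (1 - γ) * exp (-(l * γ))
      = exp (-(l * γ)) * (1 + γ * (exp l - 1)) := by
        rw [show l * (1 - γ) = l + -(l * γ) by ring, exp_add]; ring
    _ ≤ exp (-(l * γ)) * exp (γ * (exp l - 1)) := by
        gcongr; linarith [add_one_le_exp (γ * (exp l - 1))]
    _ = exp (γ * (exp l - 1 - l)) := by rw [← exp_add]; ring_nf
    _ ≤ exp (l ^ 2) := by
        gcongr
        nlinarith [exp_le_one_add_add_sq hl, sq_nonneg l]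

lemma bernoulli_tilted_mgf_le {γ t : ℝ} (hγ0 : 0 ≤ γ) (hγ1 : γ ≤ 1) (ht0 : 0 ≤ t)
    (ht2 : t ≤ 2) :
    γ * exp (t / 2 * (1 - γ - t)) + (1 - γ) * exp (-(t / 2 * (γ + t))) ≤ exp (-(t ^ 2 / 4)) :=
  calc γ * exp (t / 2 * (1 - γ - t)) + (1 - γ) * exp (-(t / 2 * (γ + t)))
      = (γ * exp (t / 2 * (1 - γ)) + (1 - γ) * exp (-(t / 2 * γ))) * exp (-(t ^ 2 / 2)) := by
        rw [add_mul, mul_assoc, mul_assoc, ← exp_add, ← exp_add]; ring_nf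
    _ ≤ exp ((t / 2) ^ 2) * exp (-(t ^ 2 / 2)) := by
        gcongr
        exact bernoulli_mgf_le_exp_sq hγ0 hγ1 (by rw [abs_of_nonneg (by positivity)]; linarith)
    _ = exp (-(t ^ 2 / 4)) := by rw [← exp_add]; ring_nf

lemma one_sub_add_mul_pow_le_exp {p m t : ℝ} (hp0 : 0 ≤ p) (hp1 : p ≤ 1) (hm0 : 0 ≤ m)
    (hm : m ≤ exp (-(t ^ 2 / 4))) (ht : t ^ 2 ≤ 2) (n : ℕ) :
    (1 - p + p * m) ^ n ≤ exp (-(t ^ 2 / 8) * n * p) := by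
  have hexp : exp (-(t ^ 2 / 4)) ≤ 1 - t ^ 2 / 8 := by
    have := exp_le_one_add_add_sq (x := -(t ^ 2 / 4))
      (by rw [abs_neg, abs_of_nonneg (by positivity)]; linarith)
    nlinarith [sq_nonneg t]
  rw [show -(t ^ 2 / 8) * n * p = n * (-(t ^ 2 / 8) * p) by ring, exp_nat_mul]
  refine pow_le_pow_left₀ (by nlinarith [mul_nonneg hp0 hm0]) ?_ n
  nlinarith [add_one_le_exp (-(t ^ 2 / 8) * p), mul_le_mul_of_nonneg_left hm hp0]

lemma abs_div_sub_lt_cases {k m γ t : ℝ} (ht : 0 < t) (h : t < |k / m - γ|) :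
    (0 ≤ t / 2 * k + -(t / 2 * (γ + t)) * m ∨ 0 ≤ -(t / 2) * k + t / 2 * (γ - t) * m) ∨
      0 ≤ 0 * k + -(t ^ 2 / 4) * m := by
  rcases le_or_gt m 0 with hm | hm
  · right; nlinarith
  rcases lt_abs.mp h with hup | hdown
  · have := (lt_div_iff₀ hm).mp (by linarith : γ + t < k / m)
    left; left; nlinarith
  · have := (div_lt_iff₀ hm).mp (by linarith : k / m < γ - t)
    left; right; nlinarith

lemma exp_indicator_inter_add_indicator {α : Type*} (A B : Set α) (a b : ℝ) (q : α) :
    exp (a * (A ∩ B).indicator 1 q + b * B.indicator 1 q) =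
      1 + (exp b - 1) * B.indicator 1 q + (exp (a + b) - exp b) * (A ∩ B).indicator 1 q := by
  by_cases hqB : q ∈ B <;> by_cases hqA : q ∈ A <;> simp [hqA, hqB, add_comm]

section

variable {Ω α ι : Type*} [MeasurableSpace Ω] [MeasurableSpace α] {μ : Measure Ω}
  {ν : Measure α}

lemma integrable_indicator_one [IsFiniteMeasure ν] {s : Set α} (hs : MeasurableSet s) :
    Integrable (s.indicator (1 : α → ℝ)) ν :=
  (integrable_const (1 : ℝ)).indicator hs

lemma integrable_exp_indicator_inter_add_indicator [IsFiniteMeasure ν] {A B : Set α}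
    (hA : MeasurableSet A) (hB : MeasurableSet B) (a b : ℝ) :
    Integrable (fun q => exp (a * (A ∩ B).indicator 1 q + b * B.indicator 1 q)) ν := by
  simp_rw [exp_indicator_inter_add_indicator]
  exact ((integrable_const _).add ((integrable_indicator_one hB).const_mul _)).add
    ((integrable_indicator_one (hA.inter hB)).const_mul _)

lemma integral_exp_indicator_inter_add_indicator [IsProbabilityMeasure ν] {A B : Set α}
    (hA : MeasurableSet A) (hB : MeasurableSet B) (a b : ℝ) :
    ∫ q, exp (a * (A ∩ B).indicator 1 q + b * B.indicator 1 q) ∂ν =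
      1 - ν.real B + ν.real B *
        ((ν[A | B]).toReal * exp (a + b) + (1 - (ν[A | B]).toReal) * exp b) := by
  have hinter : ν.real (A ∩ B) = ν.real B * (ν[A | B]).toReal := by
    rw [Set.inter_comm, measureReal_def, ← cond_mul_eq_inter hB A, ENNReal.toReal_mul, mul_comm,
      measureReal_def]
  simp_rw [exp_indicator_inter_add_indicator]
  rw [integral_add (by exact (integrable_const _).add ((integrable_indicator_one hB).const_mul _))
      ((integrable_indicator_one (hA.inter hB)).const_mul _),
    integral_add (integrable_const _) ((integrable_indicator_one hB).const_mul _),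
    integral_const_mul, integral_const_mul, integral_indicator_one hB,
    integral_indicator_one (hA.inter hB), hinter]
  simp only [integral_const, probReal_univ, smul_eq_mul, mul_one]
  ring

lemma measure_sum_nonneg_le_integral_exp_pow [Fintype ι] {Z : ι → Ω → α}
    (hZ : ∀ i, Measurable (Z i)) (hind : iIndepFun Z μ) (hlaw : ∀ i, μ.map (Z i) = ν)
    {g : α → ℝ} (hg : Measurable g) (hint : Integrable (fun a => exp (g a)) ν) :
    μ {ω | 0 ≤ ∑ i, g (Z i ω)} ≤
      ENNReal.ofReal ((∫ a, exp (g a) ∂ν) ^ Fintype.card ι) := by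
  have := hind.isProbabilityMeasure
  set W : ι → Ω → ℝ := fun i ω => g (Z i ω)
  have hW : iIndepFun W μ := hind.comp (fun _ => g) fun _ => hg
  have hWm : ∀ i, Measurable (W i) := fun i => hg.comp (hZ i)
  have hWint : ∀ i, Integrable (fun ω => exp (1 * W i ω)) μ := fun i => by
    simpa [W, Function.comp_def] using
      (integrable_map_measure (by fun_prop) (hZ i).aemeasurable).mp (hlaw i ▸ hint)
  have hWmgf : ∀ i, mgf (W i) μ 1 = ∫ a, exp (g a) ∂ν := fun i => by
    rw [← hlaw i, integral_map (hZ i).aemeasurable (by fun_prop)]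
    simp [mgf, W]
  have chernoff := measure_ge_le_exp_mul_mgf (X := ∑ i, W i) 0 zero_le_one
    (hW.integrable_exp_mul_sum hWm fun i _ => hWint i)
  rw [hW.mgf_sum hWm, Finset.prod_congr rfl fun i _ => hWmgf i] at chernoff
  simp only [Finset.sum_apply, mul_zero, exp_zero, one_mul, Finset.prod_const,
    Finset.card_univ] at chernoff
  rw [← ofReal_measureReal]
  exact ENNReal.ofReal_le_ofReal chernoff

lemma measure_nonneg_count_combination_le [Fintype ι] [IsProbabilityMeasure ν]
    {Z : ι → Ω → α} (hZ : ∀ i, Measurable (Z i)) (hind : iIndepFun Z μ)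
    (hlaw : ∀ i, μ.map (Z i) = ν) {A B : Set α} (hA : MeasurableSet A) (hB : MeasurableSet B)
    (a b : ℝ) :
    μ {ω | 0 ≤ a * ∑ i, (A ∩ B).indicator 1 (Z i ω) + b * ∑ i, B.indicator 1 (Z i ω)} ≤
      ENNReal.ofReal ((1 - ν.real B + ν.real B * ((ν[A | B]).toReal * exp (a + b) +
        (1 - (ν[A | B]).toReal) * exp b)) ^ Fintype.card ι) := by
  rw [← integral_exp_indicator_inter_add_indicator hA hB]
  convert measure_sum_nonneg_le_integral_exp_pow hZ hind hlaw
    (by have := hA.inter hB; fun_prop)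
    (integrable_exp_indicator_inter_add_indicator hA hB a b) using 4
  simp only [Finset.mul_sum, Finset.sum_add_distrib]

theorem measure_lt_abs_empiricalCond_sub_cond_le [Fintype ι] [IsProbabilityMeasure ν]
    {Z : ι → Ω → α} (hZ : ∀ i, Measurable (Z i)) (hind : iIndepFun Z μ)
    (hlaw : ∀ i, μ.map (Z i) = ν) {A B : Set α} (hA : MeasurableSet A) (hB : MeasurableSet B)
    {t : ℝ} (ht0 : 0 < t) (ht1 : t < 1) :
    μ {ω | t < |(∑ i, (A ∩ B).indicator 1 (Z i ω)) / (∑ i, B.indicator 1 (Z i ω)) -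
        (ν[A | B]).toReal|} ≤
      ENNReal.ofReal (3 * exp (-(t ^ 2 / 8) * Fintype.card ι * ν.real B)) := by
  set γ := (ν[A | B]).toReal
  set p := ν.real B
  set ε := ENNReal.ofReal (exp (-(t ^ 2 / 8) * Fintype.card ι * p))
  have hγ0 : 0 ≤ γ := ENNReal.toReal_nonneg
  have hγ1 : γ ≤ 1 := measureReal_le_one (μ := ν[|B])
  have tail : ∀ a b, γ * exp (a + b) + (1 - γ) * exp b ≤ exp (-(t ^ 2 / 4)) →
      μ {ω | 0 ≤ a * ∑ i, (A ∩ B).indicator 1 (Z i ω) + b * ∑ i, B.indicator 1 (Z i ω)} ≤ ε :=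
    fun a b hab => (measure_nonneg_count_combination_le hZ hind hlaw hA hB a b).trans <|
      ENNReal.ofReal_le_ofReal <| one_sub_add_mul_pow_le_exp measureReal_nonneg measureReal_le_one
        (add_nonneg (mul_nonneg hγ0 (exp_pos _).le) (mul_nonneg (by linarith) (exp_pos _).le))
        hab (by nlinarith) _
  have hup := bernoulli_tilted_mgf_le hγ0 hγ1 ht0.le (by linarith)
  -- the lower tail for `A` is the upper tail for `Aᶜ`, whose conditional probability is `1 - γ`
  have hdown := bernoulli_tilted_mgf_le (γ := 1 - γ) (by linarith) (by linarith) ht0.le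
    (by linarith)
  calc _ ≤ _ := measure_mono fun ω hω => abs_div_sub_lt_cases ht0 hω
    _ ≤ ε + ε + ε := by
        refine (measure_union_le _ _).trans (add_le_add ((measure_union_le _ _).trans ?_) ?_)
        · exact add_le_add (tail _ _ (by convert hup using 4; ring))
            (tail _ _ (by rw [add_comm]; convert hdown using 4 <;> ring))
        · exact tail _ _ (le_of_eq (by ring_nf))
    _ = ENNReal.ofReal (3 * exp (-(t ^ 2 / 8) * Fintype.card ι * p)) := by
        rw [ENNReal.ofReal_mul zero_le_three, ENNReal.ofReal_ofNat]; ring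

end

theorem stmt_11_general {Ω 𝓧 : Type*} [MeasurableSpace Ω] [MeasurableSpace 𝓧]
    (μ : Measure Ω)
    (n : ℕ) (X : Fin n → Ω → 𝓧) (Yv : Fin n → Ω → Option Bool)
    (hX : ∀ i, Measurable (X i)) (hYv : ∀ i, Measurable (Yv i))
    -- the pairs (Xᵢ, Yᵢ) are i.i.d. with common law ν
    (ν : Measure (𝓧 × Option Bool)) [IsProbabilityMeasure ν]
    (hiid : iIndepFun (fun i ω => (X i ω, Yv i ω)) μ)
    (hdist : ∀ i, Measure.map (fun ω => (X i ω, Yv i ω)) μ = ν)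
    (y ybar : Bool) (h : 𝓧 → Bool) (hh : Measurable h) :
    ∀ t : ℝ, 0 < t → t < 1 →
      μ {ω | t < |(∑ i, if h (X i ω) = ybar ∧ Yv i ω = some y then (1 : ℝ) else 0) /
                  (∑ i, if Yv i ω = some y then (1 : ℝ) else 0) -
                (ν[{q | h q.1 = ybar} | {q | q.2 = some y}]).toReal|} ≤
        ENNReal.ofReal (3 * Real.exp (-(t ^ 2 / 8) * n * (ν {q | q.2 = some y}).toReal)) := by
  intro t ht0 ht1
  have hA : MeasurableSet {q : 𝓧 × Option Bool | h q.1 = ybar} :=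
    measurableSet_eq_fun (hh.comp measurable_fst) measurable_const
  have hB : MeasurableSet {q : 𝓧 × Option Bool | q.2 = some y} :=
    measurable_snd (MeasurableSpace.measurableSet_top (s := {some y}))
  convert measure_lt_abs_empiricalCond_sub_cond_le (fun i => (hX i).prodMk (hYv i)) hiid hdist
    hA hB ht0 ht1 using 8
  · simp only [Set.indicator_apply, Set.mem_inter_iff, Set.mem_ofPred_eq, Pi.one_apply]
  · simp only [Set.indicator_apply, Set.mem_ofPred_eq, Pi.one_apply]
  · rw [Fintype.card_fin]
  · rfl

/-- Deviation bound for an empirical class-conditional error rate with random denominator: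
`P[|γ_S − γ| > t] ≤ 3·exp(−(t²/8)·n·p_y)`. -/
theorem stmt_11 {Ω 𝓧 : Type*} [MeasurableSpace Ω] [MeasurableSpace 𝓧]
    (μ : Measure Ω) [IsProbabilityMeasure μ]
    (n : ℕ) (X : Fin n → Ω → 𝓧) (Yv : Fin n → Ω → Option Bool)
    (hX : ∀ i, Measurable (X i)) (hYv : ∀ i, Measurable (Yv i))
    -- the pairs (Xᵢ, Yᵢ) are i.i.d. with common law ν
    (ν : Measure (𝓧 × Option Bool)) [IsProbabilityMeasure ν]
    (hiid : iIndepFun (fun i ω => (X i ω, Yv i ω)) μ)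
    (hdist : ∀ i, Measure.map (fun ω => (X i ω, Yv i ω)) μ = ν)
    (y ybar : Bool) (h : 𝓧 → Bool) (hh : Measurable h)
    (hpy : 0 < (ν {q | q.2 = some y}).toReal) :
    ∀ t : ℝ, 0 < t → t < 1 →
      μ {ω | t < |(∑ i, if h (X i ω) = ybar ∧ Yv i ω = some y then (1 : ℝ) else 0) /
                  (∑ i, if Yv i ω = some y then (1 : ℝ) else 0) -
                (ν[{q | h q.1 = ybar} | {q | q.2 = some y}]).toReal|} ≤
        ENNReal.ofReal (3 * Real.exp (-(t ^ 2 / 8) * n * (ν {q | q.2 = some y}).toReal)) :=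
  stmt_11_general μ n X Yv hX hYv ν hiid hdist y ybar h hh
end

section
/- Symmetrization for balanced error: let R(h) be the population balanced error, R_n(h) the empirical balanced error on an i.i.d. sample of size n, and R'_n(h) the empirical balanced error on an independent ghost sample of size n. Assume the single-classifier deviation bound P[|R(h) − R'_n(h)| ≥ s] ≤ 6exp(−(s²/8)n·min_y P[Y=y]) for s ∈ (0,1). Then for any t > 0 with n t² ≥ 32·log(12)/min_{y∈{0,1}} P[Y=y], it holds that P[sup_{h∈H} (R(h) − R_n(h)) > t] ≤ 2·P[sup_{h∈H} (R'_n(h) − R_n(h)) > t/2]. -/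
open MeasureTheory
open scoped ENNReal

/-! Call the first coordinate a sample `ω₁` and the second a ghost sample `ω₂`. If
`sup_h (R h - Rn h ω₁) > t`, pick `h` attaining the excess; whenever the ghost error of this
fixed `h` is within `t/2` of `R h`, the ghost event `sup_h (R'n h ω₂ - Rn h ω₁) > t/2` occurs.
The condition on `n t²` makes the single-classifier deviation bound at most `1/2`, so every
`ω₁`-section of the ghost event has measure at least `1/2`, and Tonelli gives the factor `2`. -/

namespace MeasureTheory

/-- Tonelli lower bound without measurability assumptions on `A` or `B`: pass to a measurable
hull of `B` and apply Markov's inequality to its section measures. -/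
lemma Measure.mul_measure_le_prod_of_le_measure_preimage_mk {α β : Type*} [MeasurableSpace α]
    [MeasurableSpace β] {μ : Measure α} {ν : Measure β} [SFinite ν] {A : Set α}
    {B : Set (α × β)} {c : ℝ≥0∞} (hc : ∀ a ∈ A, c ≤ ν (Prod.mk a ⁻¹' B)) :
    c * μ A ≤ μ.prod ν B := by
  set U := toMeasurable (μ.prod ν) B
  have hU : MeasurableSet U := measurableSet_toMeasurable _ _
  have hAU : A ⊆ {a | c ≤ ν (Prod.mk a ⁻¹' U)} := fun a ha =>
    (hc a ha).trans (measure_mono (Set.preimage_mono (subset_toMeasurable _ _)))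
  calc c * μ A ≤ c * μ {a | c ≤ ν (Prod.mk a ⁻¹' U)} := by gcongr
    _ ≤ ∫⁻ a, ν (Prod.mk a ⁻¹' U) ∂μ :=
      mul_meas_ge_le_lintegral₀ (measurable_measure_prodMk_left hU).aemeasurable c
    _ = μ.prod ν B := by rw [← Measure.prod_apply hU, measure_toMeasurable]

lemma one_sub_le_measure_of_measure_compl_le {α : Type*} [MeasurableSpace α] {μ : Measure α}
    [IsProbabilityMeasure μ] {s : Set α} {c : ℝ≥0∞} (h : μ sᶜ ≤ c) : 1 - c ≤ μ s := by
  refine tsub_le_iff_right.2 ?_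
  calc 1 = μ (s ∪ sᶜ) := by rw [Set.union_compl_self, measure_univ]
    _ ≤ μ s + μ sᶜ := measure_union_le _ _
    _ ≤ μ s + c := by gcongr

end MeasureTheory

lemma six_mul_exp_le_half {m n t : ℝ} (hm : 0 < m) (hnt : 32 * Real.log 12 / m ≤ n * t ^ 2) :
    6 * Real.exp (-((t / 2) ^ 2 / 8) * n * m) ≤ 1 / 2 := by
  have hlog : Real.log 12 ≤ (t / 2) ^ 2 / 8 * n * m := by
    rw [div_le_iff₀ hm] at hnt
    nlinarith
  have hexp : Real.exp (-((t / 2) ^ 2 / 8) * n * m) ≤ 12⁻¹ :=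
    calc Real.exp (-((t / 2) ^ 2 / 8) * n * m)
        ≤ Real.exp (-Real.log 12) := Real.exp_le_exp.2 (by linarith)
      _ = 12⁻¹ := by rw [Real.exp_neg, Real.exp_log (by norm_num)]
  linarith

/-- Symmetrization for the balanced error: if the single-classifier deviation bound
`P[|R(h) − R'_n(h)| ≥ s] ≤ 6·exp(−(s²/8)·n·min_y P[Y=y])` holds, then for any `t > 0`
with `n·t² ≥ 32·log 12 / min_y P[Y=y]` we have
`P[sup_h (R(h) − R_n(h)) > t] ≤ 2·P[sup_h (R'_n(h) − R_n(h)) > t/2]`. -/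
theorem stmt_14 {Ω₁ Ω₂ : Type*} [MeasurableSpace Ω₁] [MeasurableSpace Ω₂]
    (μ₁ : Measure Ω₁) (μ₂ : Measure Ω₂)
    [IsProbabilityMeasure μ₁] [IsProbabilityMeasure μ₂]
    {H : Type*} [Nonempty H]
    (n : ℕ) (p0 p1 : ℝ) (hp0 : 0 < p0) (hp1 : 0 < p1)
    (R : H → ℝ) (Rn : H → Ω₁ → ℝ) (R'n : H → Ω₂ → ℝ)
    (hRbd : ∀ h, 0 ≤ R h ∧ R h ≤ 1)
    (hRnbd : ∀ h ω₁, 0 ≤ Rn h ω₁ ∧ Rn h ω₁ ≤ 1)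
    (hR'nbd : ∀ h ω₂, 0 ≤ R'n h ω₂ ∧ R'n h ω₂ ≤ 1)
    (hdev : ∀ (h : H) (s : ℝ), 0 < s → s < 1 →
      μ₂ {ω₂ | s ≤ |R h - R'n h ω₂|} ≤
        ENNReal.ofReal (6 * Real.exp (-(s ^ 2 / 8) * n * min p0 p1)))
    (t : ℝ) (ht : 0 < t) (hnt : 32 * Real.log 12 / min p0 p1 ≤ n * t ^ 2) :
    (μ₁.prod μ₂) {ω | t < ⨆ h : H, (R h - Rn h ω.1)} ≤
      2 * (μ₁.prod μ₂) {ω | t / 2 < ⨆ h : H, (R'n h ω.2 - Rn h ω.1)} := by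
  set A : Set Ω₁ := {ω₁ | t < ⨆ h : H, (R h - Rn h ω₁)}
  set B : Set (Ω₁ × Ω₂) := {ω | t / 2 < ⨆ h : H, (R'n h ω.2 - Rn h ω.1)}
  have hsection : ∀ ω₁ ∈ A, 2⁻¹ ≤ μ₂ (Prod.mk ω₁ ⁻¹' B) := by
    intro ω₁ hω₁
    obtain ⟨h, hh⟩ := exists_lt_of_lt_ciSup (show t < ⨆ h, (R h - Rn h ω₁) from hω₁)
    have ht1 : t < 1 := by linarith [hRbd h, hRnbd h ω₁]
    have hbad : μ₂ {ω₂ | t / 2 ≤ |R h - R'n h ω₂|} ≤ 2⁻¹ := by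
      refine (hdev h (t / 2) (by positivity) (by linarith)).trans ?_
      rw [← ENNReal.ofReal_ofNat 2, ← ENNReal.ofReal_inv_of_pos two_pos]
      exact ENNReal.ofReal_le_ofReal (by linarith [six_mul_exp_le_half (lt_min hp0 hp1) hnt])
    have hgood : (Prod.mk ω₁ ⁻¹' B)ᶜ ⊆ {ω₂ | t / 2 ≤ |R h - R'n h ω₂|} := by
      intro ω₂ hω₂
      rw [Set.mem_ofPred_eq]
      by_contra! hclose
      have hbdd : BddAbove (Set.range fun h => R'n h ω₂ - Rn h ω₁) :=
        ⟨1, by rintro _ ⟨h', rfl⟩; linarith [hR'nbd h' ω₂, hRnbd h' ω₁]⟩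
      have hR'close := (abs_lt.1 hclose).2
      exact hω₂ (lt_of_lt_of_le (by linarith) (le_ciSup hbdd h))
    simpa [ENNReal.one_sub_inv_two] using
      one_sub_le_measure_of_measure_compl_le ((measure_mono hgood).trans hbad)
  have hLHS : {ω : Ω₁ × Ω₂ | t < ⨆ h : H, (R h - Rn h ω.1)} = A ×ˢ Set.univ := by
    ext; simp [A]
  rw [hLHS, Measure.prod_prod, measure_univ, mul_one,
    ← ENNReal.inv_mul_le_iff two_ne_zero ENNReal.ofNat_ne_top]
  exact Measure.mul_measure_le_prod_of_le_measure_preimage_mk hsection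
end

section
/- Under conditional independence of the views given Y ∈ {0,1}, with noise parameters α = P[Y=0|Ŷ=1], γ = P[Y=1|Ŷ=0], α+γ < 1, P[Ŷ=y]>0 for y∈{0,1}: if f̂ minimizes empirical balanced error on the pseudolabeled sample and f̂* minimizes population balanced error on Ŷ, and the uniform deviation bound sup_f |êrr_bal(f,T) − err_bal(f,Ŷ)| ≤ ε holds (for ε from the VC bound with effective sample size n·P[Ŷ≠∅]·min_y P[Ŷ=y|Ŷ≠∅]), then err_bal(f̂,Y) − inf_{f∈F} err_bal(f,Y) ≤ 2ε/(1−α−γ). -/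
/-!
Conditional independence of the two views given `Y` makes the pseudolabel `Ŷ`, seen from a
predictor on the second view, a class-conditionally noisy copy of `Y`: by the law of total
probability over `Y`, the balanced error against `Ŷ` is `(1 - α - γ) · err_bal(f, Y) + (α + γ)/2`.
Excess balanced error against `Y` is therefore the excess against `Ŷ` divided by `1 - α - γ`, and
the standard ERM argument bounds the latter by `2ε`.
-/

open MeasureTheory ProbabilityTheory

section EmpiricalRiskMinimization

variable {ι : Type*} {F : Set ι} {f g : ι} {R Rhat Remp : ι → ℝ} {ε : ℝ}

lemma IsMinOn.le_add_two_mul_of_abs_sub_le (hmin : IsMinOn Remp F f) (hf : f ∈ F)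
    (hdev : ∀ g ∈ F, |Remp g - Rhat g| ≤ ε) (hg : g ∈ F) : Rhat f ≤ Rhat g + 2 * ε := by
  linarith [isMinOn_iff.1 hmin g hg, (abs_le.1 (hdev f hf)).1, (abs_le.1 (hdev g hg)).2]

lemma IsMinOn.sub_sInf_image_le_of_abs_sub_le {a b : ℝ} (ha : 0 < a)
    (hR : ∀ g ∈ F, Rhat g = a * R g + b) (hmin : IsMinOn Remp F f) (hf : f ∈ F)
    (hdev : ∀ g ∈ F, |Remp g - Rhat g| ≤ ε) : R f - sInf (R '' F) ≤ 2 * ε / a := by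
  have hle : ∀ g ∈ F, R f - 2 * ε / a ≤ R g := by
    intro g hg
    have hRhat := hmin.le_add_two_mul_of_abs_sub_le hf hdev hg
    rw [hR f hf, hR g hg] at hRhat
    have : R f - R g ≤ 2 * ε / a := by
      rw [le_div_iff₀' ha]
      linarith
    linarith
  have := le_csInf ⟨R f, Set.mem_image_of_mem R hf⟩ (Set.forall_mem_image.2 hle)
  linarith

end EmpiricalRiskMinimization

namespace ProbabilityTheory

variable {Ω : Type*} [MeasurableSpace Ω] {μ : Measure Ω} [IsFiniteMeasure μ]

/-- `P` and `N` need not be complementary: a pseudolabeler may abstain. -/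
noncomputable def balancedError (μ : Measure Ω) (h : Ω → Bool) (P N : Set Ω) : ℝ :=
  (1 / 2) * ((μ[h ⁻¹' {false} | P]).toReal + (μ[h ⁻¹' {true} | N]).toReal)

lemma toReal_cond_preimage_false_add_true {h : Ω → Bool} (hh : Measurable h) {S : Set Ω}
    (hS : μ S ≠ 0) : (μ[h ⁻¹' {false} | S]).toReal + (μ[h ⁻¹' {true} | S]).toReal = 1 := by
  have := cond_isProbabilityMeasure (μ := μ) hS
  have hcompl : h ⁻¹' {false} = (h ⁻¹' {true})ᶜ := by ext; simp
  have hsum := probReal_compl_eq_one_sub (μ := μ[|S]) (hh (measurableSet_singleton true))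
  rw [measureReal_def, measureReal_def, ← hcompl] at hsum
  linarith

section FiniteLabel

variable {β : Type*} [Fintype β] [MeasurableSpace β] [DiscreteMeasurableSpace β]
  {Y : Ω → β} {H E : Set Ω}

theorem cond_eq_sum_cond_mul_of_condIndep (hY : Measurable Y) (hH : MeasurableSet H)
    (hμH : μ H ≠ 0)
    (hCI : ∀ y, μ[H ∩ E | Y ⁻¹' {y}] = μ[H | Y ⁻¹' {y}] * μ[E | Y ⁻¹' {y}]) :
    μ[E | H] = ∑ y, μ[Y ⁻¹' {y} | H] * μ[E | Y ⁻¹' {y}] := by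
  have hHE : μ (H ∩ E) = μ H * ∑ y, μ[Y ⁻¹' {y} | H] * μ[E | Y ⁻¹' {y}] := calc
    μ (H ∩ E) = ∑ y, μ[H ∩ E | Y ⁻¹' {y}] * μ (Y ⁻¹' {y}) := by
      conv_lhs => rw [← sum_meas_smul_cond_fiber hY μ]
      simp only [Measure.coe_finsetSum, Measure.coe_smul, Finset.sum_apply, Pi.smul_apply,
        smul_eq_mul, mul_comm]
    _ = ∑ y, μ[Y ⁻¹' {y} | H] * μ H * μ[E | Y ⁻¹' {y}] := by
      refine Finset.sum_congr rfl fun y _ => ?_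
      rw [hCI, mul_right_comm, cond_mul_eq_inter (hY (measurableSet_singleton y)),
        cond_mul_eq_inter hH, Set.inter_comm]
    _ = _ := by
      rw [Finset.mul_sum]
      exact Finset.sum_congr rfl fun y _ => by ring
  rw [cond_apply hH, hHE, ← mul_assoc, ENNReal.inv_mul_cancel hμH (measure_ne_top _ _), one_mul]

theorem toReal_cond_eq_sum_cond_mul_of_condIndep (hY : Measurable Y) (hH : MeasurableSet H)
    (hμH : μ H ≠ 0)
    (hCI : ∀ y, μ[H ∩ E | Y ⁻¹' {y}] = μ[H | Y ⁻¹' {y}] * μ[E | Y ⁻¹' {y}]) :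
    (μ[E | H]).toReal = ∑ y, (μ[Y ⁻¹' {y} | H]).toReal * (μ[E | Y ⁻¹' {y}]).toReal := by
  rw [cond_eq_sum_cond_mul_of_condIndep hY hH hμH hCI,
    ENNReal.toReal_sum fun y _ => by finiteness]
  simp only [ENNReal.toReal_mul]

end FiniteLabel

theorem balancedError_eq_of_condIndep {Y h : Ω → Bool} {P N : Set Ω} (hY : Measurable Y)
    (hh : Measurable h) (hP : MeasurableSet P) (hN : MeasurableSet N) (hμP : μ P ≠ 0)
    (hμN : μ N ≠ 0) (hμY₁ : μ (Y ⁻¹' {true}) ≠ 0) (hμY₀ : μ (Y ⁻¹' {false}) ≠ 0)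
    (hCIP : ∀ y, μ[P ∩ h ⁻¹' {false} | Y ⁻¹' {y}] =
      μ[P | Y ⁻¹' {y}] * μ[h ⁻¹' {false} | Y ⁻¹' {y}])
    (hCIN : ∀ y, μ[N ∩ h ⁻¹' {true} | Y ⁻¹' {y}] =
      μ[N | Y ⁻¹' {y}] * μ[h ⁻¹' {true} | Y ⁻¹' {y}]) :
    balancedError μ h P N =
      (1 - (μ[Y ⁻¹' {false} | P]).toReal - (μ[Y ⁻¹' {true} | N]).toReal) *
          balancedError μ h (Y ⁻¹' {true}) (Y ⁻¹' {false}) +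
        ((μ[Y ⁻¹' {false} | P]).toReal + (μ[Y ⁻¹' {true} | N]).toReal) / 2 := by
  have mixP := toReal_cond_eq_sum_cond_mul_of_condIndep hY hP hμP hCIP
  have mixN := toReal_cond_eq_sum_cond_mul_of_condIndep hY hN hμN hCIN
  rw [Fintype.sum_bool] at mixP mixN
  have hYP := toReal_cond_preimage_false_add_true hY hμP
  have hYN := toReal_cond_preimage_false_add_true hY hμN
  have hh₁ := toReal_cond_preimage_false_add_true hh hμY₁
  have hh₀ := toReal_cond_preimage_false_add_true hh hμY₀
  unfold balancedError
  rw [mixP, mixN, eq_sub_of_add_eq' hYP, eq_sub_of_add_eq hYN, eq_sub_of_add_eq' hh₁,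
    eq_sub_of_add_eq hh₀]
  ring

end ProbabilityTheory

theorem stmt_18_general {Ω 𝓧₀ 𝓧₁ : Type*} [MeasurableSpace Ω] [MeasurableSpace 𝓧₀] [MeasurableSpace 𝓧₁]
    (μ : Measure Ω) [IsProbabilityMeasure μ]
    (X₀ : Ω → 𝓧₀) (X₁ : Ω → 𝓧₁) (Y : Ω → Bool)
    (hX₀ : Measurable X₀) (hX₁ : Measurable X₁) (hY : Measurable Y)
    (hCI : ∀ (A : Set 𝓧₀) (B : Set 𝓧₁), MeasurableSet A → MeasurableSet B → ∀ y : Bool,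
      μ[X₀ ⁻¹' A ∩ X₁ ⁻¹' B | Y ⁻¹' {y}] =
        μ[X₀ ⁻¹' A | Y ⁻¹' {y}] * μ[X₁ ⁻¹' B | Y ⁻¹' {y}])
    (Yhat : 𝓧₀ → Option Bool)
    (hYhat : ∀ o : Option Bool, MeasurableSet (Yhat ⁻¹' {o}))
    (hY0 : μ (Y ⁻¹' {false}) ≠ 0) (hY1 : μ (Y ⁻¹' {true}) ≠ 0)
    (hYhat0 : μ ((fun ω => Yhat (X₀ ω)) ⁻¹' {some false}) ≠ 0)
    (hYhat1 : μ ((fun ω => Yhat (X₀ ω)) ⁻¹' {some true}) ≠ 0)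
    (α γ : ℝ)
    (hα : α = (μ[Y ⁻¹' {false} | (fun ω => Yhat (X₀ ω)) ⁻¹' {some true}]).toReal)
    (hγ : γ = (μ[Y ⁻¹' {true} | (fun ω => Yhat (X₀ ω)) ⁻¹' {some false}]).toReal)
    (hαγ : α + γ < 1)
    -- balanced errors on the true labels and on the pseudolabels
    (errY errHat : (𝓧₁ → Bool) → ℝ)
    (herrY : ∀ g : 𝓧₁ → Bool, errY g =
      (1 / 2) * ((μ[{ω | g (X₁ ω) = false} | Y ⁻¹' {true}]).toReal +
        (μ[{ω | g (X₁ ω) = true} | Y ⁻¹' {false}]).toReal))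
    (herrHat : ∀ g : 𝓧₁ → Bool, errHat g =
      (1 / 2) * ((μ[{ω | g (X₁ ω) = false} | (fun ω => Yhat (X₀ ω)) ⁻¹' {some true}]).toReal +
        (μ[{ω | g (X₁ ω) = true} | (fun ω => Yhat (X₀ ω)) ⁻¹' {some false}]).toReal))
    -- hypothesis class, ERM on the empirical balanced pseudolabel risk `errEmp`,
    -- population pseudolabel risk minimizer, and the uniform deviation bound
    (F : Set (𝓧₁ → Bool)) (hFmeas : ∀ g ∈ F, Measurable g)
    (errEmp : (𝓧₁ → Bool) → ℝ)
    (fhat : 𝓧₁ → Bool) (hfhatF : fhat ∈ F)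
    (hERM : ∀ g ∈ F, errEmp fhat ≤ errEmp g)
    (ε : ℝ)
    (hdev : ∀ g ∈ F, |errEmp g - errHat g| ≤ ε) :
    errY fhat - sInf (errY '' F) ≤ 2 * ε / (1 - α - γ) := by
  have htransfer : ∀ g ∈ F, errHat g = (1 - α - γ) * errY g + (α + γ) / 2 := by
    intro g hg
    rw [herrHat, herrY, hα, hγ]
    exact balancedError_eq_of_condIndep hY ((hFmeas g hg).comp hX₁) (hX₀ (hYhat _))
      (hX₀ (hYhat _)) hYhat1 hYhat0 hY1 hY0
      (hCI _ _ (hYhat _) (hFmeas g hg (measurableSet_singleton false)))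
      (hCI _ _ (hYhat _) (hFmeas g hg (measurableSet_singleton true)))
  exact IsMinOn.sub_sInf_image_le_of_abs_sub_le (by linarith) htransfer (isMinOn_iff.2 hERM)
    hfhatF hdev

/-- Main theorem (Theorem 1 of the paper, abstract form): under conditional independence of
the two views given `Y`, with noise parameters `α + γ < 1` and non-degenerate pseudolabels,
if `f̂` minimizes the empirical balanced error on the pseudolabeled sample, `f̂*` minimizes the
population balanced error on `Ŷ` over `F`, and the uniform deviation bound
`sup_{f ∈ F} |êrr_bal(f) − err_bal(f,Ŷ)| ≤ ε` holds, then
`err_bal(f̂,Y) − inf_{f∈F} err_bal(f,Y) ≤ 2ε/(1−α−γ)`. -/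
theorem stmt_18 {Ω 𝓧₀ 𝓧₁ : Type*} [MeasurableSpace Ω] [MeasurableSpace 𝓧₀] [MeasurableSpace 𝓧₁]
    (μ : Measure Ω) [IsProbabilityMeasure μ]
    (X₀ : Ω → 𝓧₀) (X₁ : Ω → 𝓧₁) (Y : Ω → Bool)
    (hX₀ : Measurable X₀) (hX₁ : Measurable X₁) (hY : Measurable Y)
    (hCI : ∀ (A : Set 𝓧₀) (B : Set 𝓧₁), MeasurableSet A → MeasurableSet B → ∀ y : Bool,
      μ[X₀ ⁻¹' A ∩ X₁ ⁻¹' B | Y ⁻¹' {y}] =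
        μ[X₀ ⁻¹' A | Y ⁻¹' {y}] * μ[X₁ ⁻¹' B | Y ⁻¹' {y}])
    (Yhat : 𝓧₀ → Option Bool)
    (hYhat : ∀ o : Option Bool, MeasurableSet (Yhat ⁻¹' {o}))
    (hY0 : μ (Y ⁻¹' {false}) ≠ 0) (hY1 : μ (Y ⁻¹' {true}) ≠ 0)
    (hYhat0 : μ ((fun ω => Yhat (X₀ ω)) ⁻¹' {some false}) ≠ 0)
    (hYhat1 : μ ((fun ω => Yhat (X₀ ω)) ⁻¹' {some true}) ≠ 0)
    (α γ : ℝ)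
    (hα : α = (μ[Y ⁻¹' {false} | (fun ω => Yhat (X₀ ω)) ⁻¹' {some true}]).toReal)
    (hγ : γ = (μ[Y ⁻¹' {true} | (fun ω => Yhat (X₀ ω)) ⁻¹' {some false}]).toReal)
    (hαγ : α + γ < 1)
    -- balanced errors on the true labels and on the pseudolabels
    (errY errHat : (𝓧₁ → Bool) → ℝ)
    (herrY : ∀ g : 𝓧₁ → Bool, errY g =
      (1 / 2) * ((μ[{ω | g (X₁ ω) = false} | Y ⁻¹' {true}]).toReal +
        (μ[{ω | g (X₁ ω) = true} | Y ⁻¹' {false}]).toReal))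
    (herrHat : ∀ g : 𝓧₁ → Bool, errHat g =
      (1 / 2) * ((μ[{ω | g (X₁ ω) = false} | (fun ω => Yhat (X₀ ω)) ⁻¹' {some true}]).toReal +
        (μ[{ω | g (X₁ ω) = true} | (fun ω => Yhat (X₀ ω)) ⁻¹' {some false}]).toReal))
    -- hypothesis class, ERM on the empirical balanced pseudolabel risk `errEmp`,
    -- population pseudolabel risk minimizer, and the uniform deviation bound
    (F : Set (𝓧₁ → Bool)) (hFmeas : ∀ g ∈ F, Measurable g)
    (errEmp : (𝓧₁ → Bool) → ℝ)
    (fhat fstar : 𝓧₁ → Bool) (hfhatF : fhat ∈ F) (hfstarF : fstar ∈ F)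
    (hERM : ∀ g ∈ F, errEmp fhat ≤ errEmp g)
    (hstar : ∀ g ∈ F, errHat fstar ≤ errHat g)
    (ε : ℝ) (hε : 0 ≤ ε)
    (hdev : ∀ g ∈ F, |errEmp g - errHat g| ≤ ε) :
    errY fhat - sInf (errY '' F) ≤ 2 * ε / (1 - α - γ) :=
  stmt_18_general μ X₀ X₁ Y hX₀ hX₁ hY hCI Yhat hYhat hY0 hY1 hYhat0 hYhat1 α γ hα hγ hαγ errY
    errHat herrY herrHat F hFmeas errEmp fhat hfhatF hERM ε hdev
end
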